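/- arXiv:math/0605643 — 2 statements merged into one kernel-verified Lean document; each statement's English description precedes it below -/
import Mathlib

section
/- Deletion-restriction: for a hyperplane H in an arrangement A, with A' = A \ {H} and A'' = {H' ∩ H : H' ∈ A', H' ∩ H ≠ ∅} (an arrangement in H), the characteristic polynomials satisfy χ(A, t) = χ(A', t) − χ(A'', t). -/
open Polynomial
open scoped Classical
noncomputable section

/-- The ambient vector space `ℂ^ℓ`. -/
abbrev Vsp (ℓ : ℕ) : Type := Fin ℓ → ℂ

namespace Arrangement

variable {ℓ : ℕ}

/-- The (affine) dimension of an affine subspace of `ℂ^ℓ`. -/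
def adim (X : AffineSubspace ℂ (Vsp ℓ)) : ℕ := Module.finrank ℂ X.direction

/-- `H` is an affine hyperplane of the ambient affine subspace `W`. -/
def IsHyperplaneIn (W H : AffineSubspace ℂ (Vsp ℓ)) : Prop :=
  H ≤ W ∧ H ≠ ⊥ ∧ adim H + 1 = adim W

/-- The intersection poset `L(𝒜)` of the arrangement `𝒜` inside the ambient
affine subspace `W`: all nonempty intersections of subfamilies of `𝒜`
(the empty intersection giving the ambient space `W` itself). -/
def interPoset (W : AffineSubspace ℂ (Vsp ℓ)) (𝒜 : Finset (AffineSubspace ℂ (Vsp ℓ))) :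
    Finset (AffineSubspace ℂ (Vsp ℓ)) :=
  (𝒜.powerset.image (fun I : Finset (AffineSubspace ℂ (Vsp ℓ)) => W ⊓ I.inf id)).filter (fun X => X ≠ ⊥)

/-- The Möbius function of the intersection poset, computed with recursion fuel:
`μ(W) = 1` and `μ(X) = - ∑_{Y > X} μ(Y)` (reverse-inclusion order, so `Y > X`
means `X < Y` as subspaces).  Fuel `n ≥ codim X` gives the correct value. -/
def mobiusFuel (W : AffineSubspace ℂ (Vsp ℓ)) (𝒜 : Finset (AffineSubspace ℂ (Vsp ℓ))) :
    ℕ → AffineSubspace ℂ (Vsp ℓ) → ℤ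
  | 0, _ => 1
  | n + 1, X =>
      if X = W then 1
      else - ∑ Y ∈ (interPoset W 𝒜).filter (fun Y => X < Y), mobiusFuel W 𝒜 n Y

/-- The Möbius function `μ` of `L(𝒜)` (fuel `ℓ` suffices). -/
def mobius (W : AffineSubspace ℂ (Vsp ℓ)) (𝒜 : Finset (AffineSubspace ℂ (Vsp ℓ)))
    (X : AffineSubspace ℂ (Vsp ℓ)) : ℤ :=
  mobiusFuel W 𝒜 ℓ X

/-- The characteristic polynomial `χ(𝒜, t) = ∑_{X ∈ L(𝒜)} μ(X) t^{dim X}`. -/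
def charPoly (W : AffineSubspace ℂ (Vsp ℓ)) (𝒜 : Finset (AffineSubspace ℂ (Vsp ℓ))) :
    Polynomial ℤ :=
  ∑ X ∈ interPoset W 𝒜, C (mobius W 𝒜 X) * (Polynomial.X : Polynomial ℤ) ^ (adim X)

/-- `𝒜` is essential (in the ambient subspace `W`): it contains `dim W` hyperplanes
whose defining linear forms are linearly independent, equivalently whose directions
intersect `W`'s direction trivially. -/
def EssentialIn (W : AffineSubspace ℂ (Vsp ℓ)) (𝒜 : Finset (AffineSubspace ℂ (Vsp ℓ))) : Prop :=
  ∃ s ⊆ 𝒜, s.card = adim W ∧ (s.inf fun H => H.direction) ⊓ W.direction = ⊥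

/-- The restriction `𝒜 ∩ W = {H ∩ W : H ∈ 𝒜, H ∩ W ≠ ∅}` of the arrangement `𝒜`
to the affine subspace `W`. -/
def restrictTo (W : AffineSubspace ℂ (Vsp ℓ)) (𝒜 : Finset (AffineSubspace ℂ (Vsp ℓ))) :
    Finset (AffineSubspace ℂ (Vsp ℓ)) :=
  (𝒜.image fun H => H ⊓ W).filter fun X => X ≠ ⊥

/-- `U` is a hyperplane generic (transversal) to the arrangement `𝒜`: no element of
the intersection poset is contained in `U`, and for each `X ∈ L(𝒜)` of positive
dimension, `X ∩ U` is nonempty of dimension `dim X - 1`. -/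
def GenericTo (U : AffineSubspace ℂ (Vsp ℓ)) (𝒜 : Finset (AffineSubspace ℂ (Vsp ℓ))) : Prop :=
  IsHyperplaneIn ⊤ U ∧
    ∀ X ∈ interPoset ⊤ 𝒜, ¬X ≤ U ∧ (1 ≤ adim X → X ⊓ U ≠ ⊥ ∧ adim (X ⊓ U) + 1 = adim X)

/-- The Boolean arrangement in `ℂ^ℓ`, defined by `x₁ ⋯ x_ℓ = 0`:
the `ℓ` coordinate hyperplanes `{x i = 0}`. -/
def booleanArrangement (ℓ : ℕ) : Finset (AffineSubspace ℂ (Vsp ℓ)) :=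
  Finset.univ.image fun i : Fin ℓ =>
    (LinearMap.ker (LinearMap.proj i : Vsp ℓ →ₗ[ℂ] ℂ)).toAffineSubspace

end Arrangement

/-!
Write `L, L', L''` for the intersection posets of `𝒜, 𝒜', 𝒜''` and extend each Möbius function
by zero; since `L', L'' ⊆ L` it suffices to show `μ = μ' - μ''` pointwise on `L`. Above an
element not contained in `H`, the posets `L` and `L'` coincide, so there `μ = μ'` while `μ''`
vanishes. On `L'' = {X ∈ L : X ⊆ H}` the Möbius function `μ''` is characterised by its upper sums
`∑_{Y ⊇ X} μ''(Y) = [X = H]`, and `μ' - μ` has the same upper sums: the upper sum of `μ` at `X`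
vanishes because `X ⊆ H`, the one of `μ'` is `1` exactly when no hyperplane of `𝒜'` contains `X`,
that is when `X = H`, and the parts away from `H` cancel since `μ = μ'` there.
-/

namespace Finset

theorem sum_filter_le_eq_add_sum_filter_lt {α M : Type*} [PartialOrder α] [AddCommMonoid M]
    {s : Finset α} {a : α} (ha : a ∈ s) (f : α → M) :
    ∑ x ∈ s.filter (a ≤ ·), f x = f a + ∑ x ∈ s.filter (a < ·), f x := by
  have hs : s.filter (a ≤ ·) = insert a (s.filter (a < ·)) := by
    ext x
    simp only [mem_filter, mem_insert, le_iff_eq_or_lt]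
    constructor
    · rintro ⟨hx, rfl | hlt⟩
      exacts [Or.inl rfl, Or.inr ⟨hx, hlt⟩]
    · rintro (rfl | ⟨hx, hlt⟩)
      exacts [⟨ha, Or.inl rfl⟩, ⟨hx, Or.inr hlt⟩]
  rw [hs, sum_insert (by simp)]

end Finset

namespace Arrangement

variable {ℓ : ℕ} {W H K X S : AffineSubspace ℂ (Vsp ℓ)} {𝒜 𝒝 : Finset (AffineSubspace ℂ (Vsp ℓ))}

lemma adim_le (X : AffineSubspace ℂ (Vsp ℓ)) : adim X ≤ ℓ := by
  simpa [adim] using Submodule.finrank_le X.direction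

lemma adim_lt_adim (h : X < W) (hX : X ≠ ⊥) : adim X < adim W :=
  Submodule.finrank_lt_finrank_of_lt
    (AffineSubspace.direction_lt_of_nonempty h ((AffineSubspace.nonempty_iff_ne_bot X).2 hX))

lemma eq_of_le_of_adim_le (h : X ≤ W) (hX : X ≠ ⊥) (hd : adim W ≤ adim X) : X = W :=
  h.eq_of_not_lt fun hlt => (adim_lt_adim hlt hX).not_ge hd

lemma IsHyperplaneIn.not_le (hK : IsHyperplaneIn W K) : ¬W ≤ K := by
  intro h
  have := hK.2.2
  rw [le_antisymm hK.1 h] at this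
  omega

lemma IsHyperplaneIn.eq_of_le (hH : IsHyperplaneIn W H) (hK : IsHyperplaneIn W K) (h : H ≤ K) :
    H = K :=
  eq_of_le_of_adim_le h hH.2.1 (by have := hH.2.2; have := hK.2.2; omega)

lemma mem_interPoset : X ∈ interPoset W 𝒜 ↔ (∃ I ⊆ 𝒜, W ⊓ I.inf id = X) ∧ X ≠ ⊥ := by
  simp [interPoset]

lemma le_of_mem_interPoset (h : X ∈ interPoset W 𝒜) : X ≤ W := by
  obtain ⟨⟨I, -, rfl⟩, -⟩ := mem_interPoset.1 h
  exact inf_le_left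

lemma ne_bot_of_mem_interPoset (h : X ∈ interPoset W 𝒜) : X ≠ ⊥ :=
  (mem_interPoset.1 h).2

lemma interPoset_mono (h : 𝒜 ⊆ 𝒝) : interPoset W 𝒜 ⊆ interPoset W 𝒝 := fun X hX => by
  obtain ⟨⟨I, hI, rfl⟩, hXb⟩ := mem_interPoset.1 hX
  exact mem_interPoset.2 ⟨⟨I, hI.trans h, rfl⟩, hXb⟩

lemma mobiusFuel_self (n : ℕ) : mobiusFuel W 𝒜 n W = 1 := by
  cases n <;> simp [mobiusFuel]

lemma mobiusFuel_stable (hX : X ≠ ⊥) (hXW : X ≤ W) {n m : ℕ} (hn : adim W ≤ adim X + n)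
    (hm : adim W ≤ adim X + m) : mobiusFuel W 𝒜 n X = mobiusFuel W 𝒜 m X := by
  induction n generalizing m X with
  | zero => rw [eq_of_le_of_adim_le hXW hX (by omega), mobiusFuel_self, mobiusFuel_self]
  | succ n ih =>
    by_cases hXW' : X = W
    · rw [hXW', mobiusFuel_self, mobiusFuel_self]
    have hlt := adim_lt_adim (lt_of_le_of_ne hXW hXW') hX
    obtain ⟨m, rfl⟩ : ∃ m', m = m' + 1 := ⟨m - 1, by omega⟩
    rw [mobiusFuel, mobiusFuel, if_neg hXW', if_neg hXW']
    refine congrArg Neg.neg (Finset.sum_congr rfl fun Y hY => ?_)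
    obtain ⟨hYL, hXY⟩ := Finset.mem_filter.1 hY
    have := adim_lt_adim hXY hX
    exact ih (ne_bot_of_mem_interPoset hYL) (le_of_mem_interPoset hYL) (by omega) (by omega)

lemma mobius_self : mobius W 𝒜 W = 1 :=
  mobiusFuel_self ℓ

lemma mobius_of_ne (hX : X ∈ interPoset W 𝒜) (hXW : X ≠ W) :
    mobius W 𝒜 X = -∑ Y ∈ (interPoset W 𝒜).filter (X < ·), mobius W 𝒜 Y := by
  have hXb := ne_bot_of_mem_interPoset hX
  have hlt := adim_lt_adim (lt_of_le_of_ne (le_of_mem_interPoset hX) hXW) hXb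
  have := adim_le W
  obtain ⟨k, hk⟩ : ∃ k, adim W = adim X + (k + 1) := ⟨adim W - adim X - 1, by omega⟩
  rw [mobius, mobiusFuel_stable hXb (le_of_mem_interPoset hX) (m := k + 1) (by omega) hk.le,
    mobiusFuel, if_neg hXW]
  refine congrArg Neg.neg (Finset.sum_congr rfl fun Y hY => ?_)
  obtain ⟨hYL, hXY⟩ := Finset.mem_filter.1 hY
  have := adim_lt_adim hXY hXb
  exact mobiusFuel_stable (ne_bot_of_mem_interPoset hYL) (le_of_mem_interPoset hYL) (by omega)
    (by omega)

lemma sum_mobius_upper_of_mem (hX : X ∈ interPoset W 𝒜) :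
    ∑ Y ∈ (interPoset W 𝒜).filter (X ≤ ·), mobius W 𝒜 Y = if X = W then 1 else 0 := by
  rw [Finset.sum_filter_le_eq_add_sum_filter_lt hX]
  split_ifs with hXW
  · subst hXW
    rw [Finset.filter_false_of_mem fun Y hY => (le_of_mem_interPoset hY).not_gt, mobius_self,
      Finset.sum_empty, add_zero]
  · rw [mobius_of_ne hX hXW, neg_add_cancel]

lemma eq_mobius_of_sum_upper {f : AffineSubspace ℂ (Vsp ℓ) → ℤ}
    (hf : ∀ X ∈ interPoset W 𝒜,
      ∑ Y ∈ (interPoset W 𝒜).filter (X ≤ ·), f Y = if X = W then 1 else 0)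
    (hX : X ∈ interPoset W 𝒜) : f X = mobius W 𝒜 X := by
  induction hk : ℓ - adim X using Nat.strong_induction_on generalizing X with
  | _ k ih =>
  have hsum := (hf X hX).trans (sum_mobius_upper_of_mem hX).symm
  rw [Finset.sum_filter_le_eq_add_sum_filter_lt hX,
    Finset.sum_filter_le_eq_add_sum_filter_lt hX] at hsum
  have hupper : ∑ Y ∈ (interPoset W 𝒜).filter (X < ·), f Y =
      ∑ Y ∈ (interPoset W 𝒜).filter (X < ·), mobius W 𝒜 Y :=
    Finset.sum_congr rfl fun Y hY => by
      obtain ⟨hYL, hXY⟩ := Finset.mem_filter.1 hY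
      have := adim_lt_adim hXY (ne_bot_of_mem_interPoset hX)
      have := adim_le Y
      exact ih _ (by omega) hYL rfl
  linarith

lemma mobiusFuel_eq_of_forall_le_iff
    (h : ∀ Y, X ≤ Y → (Y ∈ interPoset W 𝒜 ↔ Y ∈ interPoset W 𝒝)) (n : ℕ) :
    mobiusFuel W 𝒜 n X = mobiusFuel W 𝒝 n X := by
  induction n generalizing X with
  | zero => rfl
  | succ n ih =>
    have hfilter : (interPoset W 𝒜).filter (X < ·) = (interPoset W 𝒝).filter (X < ·) := by
      ext Y
      simp only [Finset.mem_filter]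
      exact ⟨fun ⟨hY, hXY⟩ => ⟨(h Y hXY.le).1 hY, hXY⟩, fun ⟨hY, hXY⟩ => ⟨(h Y hXY.le).2 hY, hXY⟩⟩
    rw [mobiusFuel, mobiusFuel, hfilter]
    refine if_congr Iff.rfl rfl (congrArg Neg.neg (Finset.sum_congr rfl fun Y hY => ?_))
    exact ih fun Z hYZ => h Z ((Finset.mem_filter.1 hY).2.le.trans hYZ)

lemma mobius_eq_of_forall_le_iff
    (h : ∀ Y, X ≤ Y → (Y ∈ interPoset W 𝒜 ↔ Y ∈ interPoset W 𝒝)) :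
    mobius W 𝒜 X = mobius W 𝒝 X :=
  mobiusFuel_eq_of_forall_le_iff h ℓ

lemma charPoly_congr (h : interPoset W 𝒜 = interPoset W 𝒝) : charPoly W 𝒜 = charPoly W 𝒝 := by
  rw [charPoly, charPoly, h]
  refine Finset.sum_congr rfl fun X _ => ?_
  rw [mobius_eq_of_forall_le_iff (𝒝 := 𝒝) fun Y _ => by rw [h]]

-- Upper sums at an arbitrary `S` are those at its closure, the intersection of all `K ⊇ S`.
lemma sum_mobius_upper (hS : S ≤ W) (hSb : S ≠ ⊥) :
    ∑ Y ∈ (interPoset W 𝒜).filter (S ≤ ·), mobius W 𝒜 Y =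
      if ∀ K ∈ 𝒜, S ≤ K → W ≤ K then 1 else 0 := by
  set Z := W ⊓ (𝒜.filter (S ≤ ·)).inf id
  have hSZ : S ≤ Z := le_inf hS (Finset.le_inf fun K hK => (Finset.mem_filter.1 hK).2)
  have hZ : Z ∈ interPoset W 𝒜 :=
    mem_interPoset.2 ⟨⟨_, Finset.filter_subset _ _, rfl⟩, ne_bot_of_le_ne_bot hSb hSZ⟩
  have hfilter : (interPoset W 𝒜).filter (S ≤ ·) = (interPoset W 𝒜).filter (Z ≤ ·) := by
    refine Finset.filter_congr fun Y hY => ⟨fun hSY => ?_, hSZ.trans⟩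
    obtain ⟨⟨I, hI, rfl⟩, -⟩ := mem_interPoset.1 hY
    refine inf_le_inf_left W (Finset.le_inf fun K hK => Finset.inf_le ?_)
    exact Finset.mem_filter.2 ⟨hI hK, hSY.trans (inf_le_right.trans (Finset.inf_le hK))⟩
  have hZW : Z = W ↔ ∀ K ∈ 𝒜, S ≤ K → W ≤ K := by
    rw [inf_eq_left, Finset.le_inf_iff]
    simp only [Finset.mem_filter, id, and_imp]
  rw [hfilter, sum_mobius_upper_of_mem hZ]
  exact if_congr hZW rfl rfl

def mobiusExt (W : AffineSubspace ℂ (Vsp ℓ)) (𝒜 : Finset (AffineSubspace ℂ (Vsp ℓ)))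
    (X : AffineSubspace ℂ (Vsp ℓ)) : ℤ :=
  if X ∈ interPoset W 𝒜 then mobius W 𝒜 X else 0

lemma mobiusExt_of_mem (h : X ∈ interPoset W 𝒜) : mobiusExt W 𝒜 X = mobius W 𝒜 X :=
  if_pos h

lemma mobiusExt_of_notMem (h : X ∉ interPoset W 𝒜) : mobiusExt W 𝒜 X = 0 :=
  if_neg h

lemma sum_filter_mobiusExt {s : Finset (AffineSubspace ℂ (Vsp ℓ))} (hs : interPoset W 𝒜 ⊆ s)
    (p : AffineSubspace ℂ (Vsp ℓ) → Prop) :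
    ∑ Y ∈ s.filter p, mobiusExt W 𝒜 Y = ∑ Y ∈ (interPoset W 𝒜).filter p, mobius W 𝒜 Y := by
  rw [← Finset.sum_subset (Finset.filter_subset_filter p hs) fun Y hYs hYL =>
    mobiusExt_of_notMem fun h => hYL (Finset.mem_filter.2 ⟨h, (Finset.mem_filter.1 hYs).2⟩)]
  exact Finset.sum_congr rfl fun Y hY => mobiusExt_of_mem (Finset.mem_filter.1 hY).1

lemma charPoly_eq_sum_mobiusExt {s : Finset (AffineSubspace ℂ (Vsp ℓ))}
    (hs : interPoset W 𝒜 ⊆ s) :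
    charPoly W 𝒜 = ∑ Y ∈ s, C (mobiusExt W 𝒜 Y) * (Polynomial.X : ℤ[X]) ^ adim Y := by
  rw [charPoly, ← Finset.sum_subset hs fun Y _ hYL => by
    rw [mobiusExt_of_notMem hYL, C_0, zero_mul]]
  exact Finset.sum_congr rfl fun Y hY => by rw [mobiusExt_of_mem hY]

lemma mem_interPoset_erase_iff (hX : ¬X ≤ H) :
    X ∈ interPoset W (𝒜.erase H) ↔ X ∈ interPoset W 𝒜 := by
  refine ⟨fun h => interPoset_mono (𝒜.erase_subset H) h, fun h => ?_⟩
  obtain ⟨⟨I, hI, rfl⟩, hXb⟩ := mem_interPoset.1 h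
  refine mem_interPoset.2 ⟨⟨I, Finset.subset_erase.2 ⟨hI, fun hHI => hX ?_⟩, rfl⟩, hXb⟩
  exact inf_le_right.trans (Finset.inf_le hHI)

lemma mobiusExt_erase_of_not_le (hX : X ∈ interPoset W 𝒜) (hXH : ¬X ≤ H) :
    mobiusExt W (𝒜.erase H) X = mobius W 𝒜 X := by
  rw [mobiusExt_of_mem ((mem_interPoset_erase_iff hXH).2 hX)]
  exact mobius_eq_of_forall_le_iff fun Y hXY =>
    mem_interPoset_erase_iff fun hYH => hXH (hXY.trans hYH)

lemma mem_interPoset_erase_iff_le (hH : H ∈ 𝒜) (hHW : H ≤ W) :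
    X ∈ interPoset H (𝒜.erase H) ↔ X ∈ interPoset W 𝒜 ∧ X ≤ H := by
  simp only [mem_interPoset]
  constructor
  · rintro ⟨⟨I, hI, rfl⟩, hXb⟩
    refine ⟨⟨⟨insert H I, Finset.insert_subset hH (hI.trans (𝒜.erase_subset H)), ?_⟩, hXb⟩,
      inf_le_left⟩
    rw [Finset.inf_insert, id, ← inf_assoc, inf_eq_right.2 hHW]
  · rintro ⟨⟨⟨I, hI, rfl⟩, hXb⟩, hXH⟩
    refine ⟨⟨I.erase H, Finset.erase_subset_erase H hI, ?_⟩, hXb⟩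
    calc H ⊓ (I.erase H).inf id = H ⊓ I.inf id := by
          refine le_antisymm (le_inf inf_le_left (Finset.le_inf fun K hK => ?_))
            (inf_le_inf_left H (Finset.inf_mono (I.erase_subset H)))
          by_cases hKH : K = H
          · exact hKH ▸ inf_le_left
          · exact inf_le_right.trans (Finset.inf_le (Finset.mem_erase.2 ⟨hKH, hK⟩))
      _ = H ⊓ (W ⊓ I.inf id) := by rw [← inf_assoc, inf_eq_left.2 hHW]
      _ = W ⊓ I.inf id := inf_eq_right.2 hXH

lemma inf_inf_image_inf (H : AffineSubspace ℂ (Vsp ℓ)) (I : Finset (AffineSubspace ℂ (Vsp ℓ))) :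
    H ⊓ (I.image (· ⊓ H)).inf id = H ⊓ I.inf id := by
  rw [Finset.inf_image]
  apply le_antisymm <;> refine le_inf inf_le_left (Finset.le_inf fun K hK => ?_)
  · exact inf_le_right.trans ((Finset.inf_le hK).trans inf_le_left)
  · exact le_inf (inf_le_right.trans (Finset.inf_le hK)) inf_le_left

lemma interPoset_restrictTo (ℬ : Finset (AffineSubspace ℂ (Vsp ℓ))) :
    interPoset H (restrictTo H ℬ) = interPoset H ℬ := by
  ext X
  simp only [mem_interPoset]
  constructor
  · rintro ⟨⟨J, hJ, rfl⟩, hXb⟩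
    obtain ⟨I, hI, rfl⟩ := Finset.subset_image_iff.1 (hJ.trans (Finset.filter_subset _ _))
    exact ⟨⟨I, hI, (inf_inf_image_inf H I).symm⟩, hXb⟩
  · rintro ⟨⟨I, hI, rfl⟩, hXb⟩
    refine ⟨⟨I.image (· ⊓ H), fun j hj => ?_, inf_inf_image_inf H I⟩, hXb⟩
    obtain ⟨K, hK, rfl⟩ := Finset.mem_image.1 hj
    refine Finset.mem_filter.2 ⟨Finset.mem_image_of_mem _ (hI hK), fun hbot => hXb ?_⟩
    rw [eq_bot_iff, ← hbot]
    exact le_inf (inf_le_right.trans (Finset.inf_le hK)) inf_le_left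

section Hyperplanes

variable (hhyp : ∀ K ∈ 𝒜, IsHyperplaneIn W K) (hH : H ∈ 𝒜)
include hhyp hH

lemma exists_mem_erase_le_iff_ne (hX : X ∈ interPoset H (𝒜.erase H)) :
    (∃ K ∈ 𝒜.erase H, X ≤ K) ↔ X ≠ H := by
  obtain ⟨⟨I, hI, rfl⟩, -⟩ := mem_interPoset.1 hX
  constructor
  · rintro ⟨K, hK, hle⟩ heq
    obtain ⟨hKH, hK⟩ := Finset.mem_erase.1 hK
    exact hKH ((hhyp H hH).eq_of_le (hhyp K hK) (heq ▸ hle)).symm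
  · intro hne
    obtain ⟨K, hK⟩ := I.nonempty_iff_ne_empty.2 (by rintro rfl; simp at hne)
    exact ⟨K, hI hK, inf_le_right.trans (Finset.inf_le hK)⟩

lemma mobius_restriction (hX : X ∈ interPoset H (𝒜.erase H)) :
    mobius H (𝒜.erase H) X = mobiusExt W (𝒜.erase H) X - mobius W 𝒜 X := by
  have hHW := (hhyp H hH).1
  refine (eq_mobius_of_sum_upper (f := fun Y => mobiusExt W (𝒜.erase H) Y - mobius W 𝒜 Y)
    (fun Y hY => ?_) hX).symm
  obtain ⟨hYL, hYH⟩ := (mem_interPoset_erase_iff_le hH hHW).1 hY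
  have hfilter : (interPoset H (𝒜.erase H)).filter (Y ≤ ·) =
      ((interPoset W 𝒜).filter (Y ≤ ·)).filter (· ≤ H) := by
    ext Z
    simp only [Finset.mem_filter, mem_interPoset_erase_iff_le hH hHW]
    tauto
  have hcond : (∀ K ∈ 𝒜.erase H, Y ≤ K → W ≤ K) ↔ Y = H := by
    rw [← not_iff_not, ← ne_eq, ← exists_mem_erase_le_iff_ne hhyp hH hY]
    push Not
    exact exists_congr fun K => and_congr_right fun hK =>
      and_iff_left ((hhyp K (Finset.mem_of_mem_erase hK)).not_le)
  have hsum' : ∑ Z ∈ (interPoset W (𝒜.erase H)).filter (Y ≤ ·), mobius W (𝒜.erase H) Z =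
      if Y = H then 1 else 0 :=
    (sum_mobius_upper (hYH.trans hHW) (ne_bot_of_mem_interPoset hY)).trans
      (if_congr hcond rfl rfl)
  have hsum : ∑ Z ∈ (interPoset W 𝒜).filter (Y ≤ ·), mobius W 𝒜 Z = 0 := by
    rw [sum_mobius_upper (hYH.trans hHW) (ne_bot_of_mem_interPoset hY),
      if_neg fun h => (hhyp H hH).not_le (h H hH hYH)]
  have hoff : ∀ Z ∈ (interPoset W 𝒜).filter (Y ≤ ·),
      mobiusExt W (𝒜.erase H) Z - mobius W 𝒜 Z ≠ 0 → Z ≤ H := fun Z hZ hne =>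
    by_contra fun hZH => hne (by rw [mobiusExt_erase_of_not_le (Finset.mem_filter.1 hZ).1 hZH,
      sub_self])
  rw [hfilter, Finset.sum_filter_of_ne hoff, Finset.sum_sub_distrib,
    sum_filter_mobiusExt (interPoset_mono (𝒜.erase_subset H)), hsum', hsum, sub_zero]

lemma mobius_deletion_restriction (hX : X ∈ interPoset W 𝒜) :
    mobius W 𝒜 X = mobiusExt W (𝒜.erase H) X - mobiusExt H (𝒜.erase H) X := by
  have hHW := (hhyp H hH).1
  by_cases hXH : X ≤ H
  · have hX'' := (mem_interPoset_erase_iff_le hH hHW).2 ⟨hX, hXH⟩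
    rw [mobiusExt_of_mem hX'', mobius_restriction hhyp hH hX'', sub_sub_cancel]
  · rw [mobiusExt_of_notMem fun h => hXH ((mem_interPoset_erase_iff_le hH hHW).1 h).2,
      mobiusExt_erase_of_not_le hX hXH, sub_zero]

end Hyperplanes

end Arrangement

open Arrangement in
/-- **Deletion–restriction.** For `H ∈ 𝒜`, with `𝒜' = 𝒜 \ {H}` and
`𝒜'' = 𝒜' ∩ H` (an arrangement in `H`), one has `χ(𝒜,t) = χ(𝒜',t) - χ(𝒜'',t)`. -/
theorem deletion_restriction (ℓ : ℕ) (𝒜 : Finset (AffineSubspace ℂ (Vsp ℓ)))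
    (hhyp : ∀ K ∈ 𝒜, IsHyperplaneIn ⊤ K) (H : AffineSubspace ℂ (Vsp ℓ)) (hH : H ∈ 𝒜) :
    charPoly ⊤ 𝒜 = charPoly ⊤ (𝒜.erase H) - charPoly H (restrictTo H (𝒜.erase H)) := by
  rw [charPoly_congr (interPoset_restrictTo _),
    charPoly_eq_sum_mobiusExt (interPoset_mono (𝒜.erase_subset H)),
    charPoly_eq_sum_mobiusExt fun X hX => ((mem_interPoset_erase_iff_le hH le_top).1 hX).1,
    ← Finset.sum_sub_distrib, charPoly]
  refine Finset.sum_congr rfl fun X hX => ?_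
  rw [mobius_deletion_restriction hhyp hH hX, map_sub, sub_mul]
end
end

section
/- For an essential affine hyperplane arrangement A in C^ℓ and a generic hyperplane U, the Euler characteristic of the generic section satisfies (−1)^{ℓ−1} χ(A ∩ U, 1) > 0. Equivalently, (−1)^{ℓ−1} χ(M(A) ∩ U) > 0 where χ(M(A)∩U) denotes the topological Euler characteristic of the complement of the restricted arrangement. -/
open Polynomial
open scoped Classical
noncomputable section

namespace EulerAux
open Arrangement Finset

variable {ℓ : ℕ}

lemma vsp_finrank : Module.finrank ℂ (Vsp ℓ) = ℓ := Module.finrank_fin_fun ℂ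

lemma adim_top : adim (⊤ : AffineSubspace ℂ (Vsp ℓ)) = ℓ := by
  rw [adim, AffineSubspace.direction_top]
  rw [finrank_top]; exact vsp_finrank

lemma top_ne_bot' : (⊤ : AffineSubspace ℂ (Vsp ℓ)) ≠ ⊥ := by
  rw [← AffineSubspace.nonempty_iff_ne_bot]
  exact ⟨0, trivial⟩

lemma nonempty_coe {X : AffineSubspace ℂ (Vsp ℓ)} (h : X ≠ ⊥) : (X : Set (Vsp ℓ)).Nonempty :=
  (AffineSubspace.nonempty_iff_ne_bot X).2 h

lemma adim_mono {X Y : AffineSubspace ℂ (Vsp ℓ)} (h : X ≤ Y) : adim X ≤ adim Y :=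
  Submodule.finrank_mono (AffineSubspace.direction_le h)

lemma eq_of_le_of_adim_le {X Y : AffineSubspace ℂ (Vsp ℓ)} (hle : X ≤ Y)
    (hd : adim Y ≤ adim X) (hX : X ≠ ⊥) : X = Y := by
  have hdir : X.direction = Y.direction :=
    Submodule.eq_of_le_of_finrank_le (AffineSubspace.direction_le hle) hd
  obtain ⟨p, hp⟩ := nonempty_coe hX
  exact AffineSubspace.ext_of_direction_eq hdir ⟨p, hp, hle hp⟩

lemma adim_lt_of_lt {X Y : AffineSubspace ℂ (Vsp ℓ)} (h : X < Y) (hX : X ≠ ⊥) :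
    adim X < adim Y := by
  rcases lt_or_ge (adim X) (adim Y) with h' | h'
  · exact h'
  · exact absurd (eq_of_le_of_adim_le h.le h' hX) h.ne

/-- Being an affine hyperplane of the full space. -/
def IsHyp (H : AffineSubspace ℂ (Vsp ℓ)) : Prop := H ≠ ⊥ ∧ adim H + 1 = ℓ

/-- Cutting a nonempty affine subspace by a hyperplane not containing its direction. -/
lemma cut {H Y : AffineSubspace ℂ (Vsp ℓ)} (hH : IsHyp H) (hY : Y ≠ ⊥)
    (hd : ¬ Y.direction ≤ H.direction) :
    Y ⊓ H ≠ ⊥ ∧ (Y ⊓ H).direction = Y.direction ⊓ H.direction ∧ adim (Y ⊓ H) + 1 = adim Y := by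
  have hsup : Y.direction ⊔ H.direction = ⊤ := by
    have hlt : H.direction < Y.direction ⊔ H.direction := by
      refine lt_of_le_of_ne le_sup_right fun he => hd ?_
      rw [he]; exact le_sup_left
    have h1 : ℓ ≤ Module.finrank ℂ (Y.direction ⊔ H.direction : Submodule ℂ (Vsp ℓ)) := by
      have hlt2 : Module.finrank ℂ H.direction <
          Module.finrank ℂ (Y.direction ⊔ H.direction : Submodule ℂ (Vsp ℓ)) :=
        Submodule.finrank_lt_finrank_of_lt hlt
      have h2 : Module.finrank ℂ H.direction + 1 = ℓ := hH.2
      omega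
    apply Submodule.eq_top_of_finrank_eq
    rw [vsp_finrank]
    refine le_antisymm ?_ h1
    have h4 := Submodule.finrank_le (Y.direction ⊔ H.direction)
    rwa [vsp_finrank] at h4
  obtain ⟨p, hpY, hpH⟩ := AffineSubspace.inter_nonempty_of_nonempty_of_sup_direction_eq_top
    (nonempty_coe hY) (nonempty_coe hH.1) hsup
  have hne : Y ⊓ H ≠ ⊥ := by
    rw [← AffineSubspace.nonempty_iff_ne_bot]
    exact ⟨p, hpY, hpH⟩
  have hdir : (Y ⊓ H).direction = Y.direction ⊓ H.direction :=
    AffineSubspace.direction_inf_of_mem hpY hpH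
  refine ⟨hne, hdir, ?_⟩
  have hkey := Submodule.finrank_sup_add_finrank_inf_eq Y.direction H.direction
  rw [hsup, finrank_top, vsp_finrank] at hkey
  have hHd : Module.finrank ℂ H.direction + 1 = ℓ := hH.2
  have hlt' : Y.direction ⊓ H.direction < Y.direction := by
    refine lt_of_le_of_ne inf_le_left fun he => hd ?_
    rw [← he]; exact inf_le_right
  have h3 := Submodule.finrank_lt_finrank_of_lt hlt'
  have h5 : Module.finrank ℂ (Y.direction ⊓ H.direction : Submodule ℂ (Vsp ℓ)) <
      Module.finrank ℂ Y.direction := h3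
  rw [adim, adim, hdir]
  omega

end EulerAux
namespace EulerAux
open Arrangement Finset

variable {ℓ : ℕ}

/-- Admissibility: the intersection with `X` is nonempty of dimension at least 1. -/
def adm (X : AffineSubspace ℂ (Vsp ℓ)) (J : Finset (AffineSubspace ℂ (Vsp ℓ))) : Prop :=
  X ⊓ J.inf id ≠ ⊥ ∧ 1 ≤ adim (X ⊓ J.inf id)

/-- The inclusion-exclusion sum over admissible subsets. -/
def Isum (X : AffineSubspace ℂ (Vsp ℓ)) (𝒜 : Finset (AffineSubspace ℂ (Vsp ℓ))) : ℤ :=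
  ∑ J ∈ 𝒜.powerset, if adm X J then (-1 : ℤ) ^ J.card else 0

lemma Isum_erase {𝒜 : Finset (AffineSubspace ℂ (Vsp ℓ))} {H₀ : AffineSubspace ℂ (Vsp ℓ)}
    (h : H₀ ∈ 𝒜) (X : AffineSubspace ℂ (Vsp ℓ)) :
    Isum X 𝒜 = Isum X (𝒜.erase H₀) - Isum (X ⊓ H₀) (𝒜.erase H₀) := by
  have h1 : insert H₀ (𝒜.erase H₀) = 𝒜 := Finset.insert_erase h
  rw [Isum, ← h1, Finset.sum_powerset_insert (Finset.notMem_erase _ _)]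
  have h2 : ∀ J ∈ (𝒜.erase H₀).powerset,
      (if adm X (insert H₀ J) then (-1 : ℤ) ^ (insert H₀ J).card else 0)
        = -(if adm (X ⊓ H₀) J then (-1 : ℤ) ^ J.card else 0) := by
    intro J hJ
    have hJ' : H₀ ∉ J := fun hc =>
      Finset.notMem_erase H₀ 𝒜 (Finset.mem_powerset.1 hJ hc)
    have hinf : X ⊓ (insert H₀ J).inf id = (X ⊓ H₀) ⊓ J.inf id := by
      rw [Finset.inf_insert]
      simp only [id]
      rw [← inf_assoc]
    have hadm : adm X (insert H₀ J) ↔ adm (X ⊓ H₀) J := by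
      unfold adm; rw [hinf]
    have hcard : (insert H₀ J).card = J.card + 1 := Finset.card_insert_of_notMem hJ'
    by_cases hc : adm (X ⊓ H₀) J
    · rw [if_pos (hadm.2 hc), if_pos hc, hcard, pow_succ]
      ring
    · rw [if_neg (fun hx => hc (hadm.1 hx)), if_neg hc, neg_zero]
  rw [Finset.sum_congr rfl h2, Finset.sum_neg_distrib]
  rw [Isum, Isum, Finset.erase_insert (Finset.notMem_erase _ _)]
  ring

lemma Isum_eq_zero_of_le {X H : AffineSubspace ℂ (Vsp ℓ)} {𝒜 : Finset (AffineSubspace ℂ (Vsp ℓ))}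
    (hH : H ∈ 𝒜) (hle : X ≤ H) : Isum X 𝒜 = 0 := by
  rw [Isum_erase hH, inf_eq_left.2 hle, sub_self]

lemma Isum_eq_zero_of_small {X : AffineSubspace ℂ (Vsp ℓ)} {𝒜 : Finset (AffineSubspace ℂ (Vsp ℓ))}
    (h : X = ⊥ ∨ adim X = 0) : Isum X 𝒜 = 0 := by
  refine Finset.sum_eq_zero fun J hJ => ?_
  rw [if_neg]
  rintro ⟨hne, hd⟩
  rcases h with h | h
  · exact hne (by rw [h, bot_inf_eq])
  · have := adim_mono (inf_le_left : X ⊓ J.inf id ≤ X)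
    omega

/-- Essentiality of a family of hyperplanes relative to `X`, via directions. -/
def Ess (X : AffineSubspace ℂ (Vsp ℓ)) (𝒜 : Finset (AffineSubspace ℂ (Vsp ℓ))) : Prop :=
  ∃ s ⊆ 𝒜, (s.inf fun H => H.direction) ⊓ X.direction = ⊥

end EulerAux
namespace EulerAux
open Arrangement Finset

variable {ℓ : ℕ}

theorem main_pos : ∀ (n : ℕ) (𝒜 : Finset (AffineSubspace ℂ (Vsp ℓ)))
    (X : AffineSubspace ℂ (Vsp ℓ)),
    𝒜.card ≤ n → (∀ H ∈ 𝒜, IsHyp H) → (∀ H ∈ 𝒜, ¬ X ≤ H) → X ≠ ⊥ → 1 ≤ adim X →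
    Ess X 𝒜 → 0 < (-1 : ℤ) ^ (adim X - 1) * Isum X 𝒜 := by
  intro n
  induction n with
  | zero =>
    intro 𝒜 X hcard _ _ hX hdim hess
    have h𝒜 : 𝒜 = ∅ := Finset.card_eq_zero.1 (Nat.le_zero.1 hcard)
    obtain ⟨s, hs, hbot⟩ := hess
    have hs' : s = ∅ := Finset.subset_empty.1 (h𝒜 ▸ hs)
    rw [hs', Finset.inf_empty, top_inf_eq] at hbot
    rw [adim, hbot, finrank_bot] at hdim
    omega
  | succ n IH =>
    intro 𝒜 X hcard hhyp hnle hX hdim hess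
    by_cases hmin : ∃ H₀ ∈ 𝒜, Ess X (𝒜.erase H₀)
    · -- non-minimal case: deletion-restriction
      obtain ⟨H₀, hH₀, hess'⟩ := hmin
      have hcardB : (𝒜.erase H₀).card ≤ n := by
        rw [Finset.card_erase_of_mem hH₀]; omega
      have hhypB : ∀ H ∈ 𝒜.erase H₀, IsHyp H := fun H hH =>
        hhyp H (Finset.mem_of_mem_erase hH)
      have hnleB : ∀ H ∈ 𝒜.erase H₀, ¬ X ≤ H := fun H hH =>
        hnle H (Finset.mem_of_mem_erase hH)
      have hIH1 := IH (𝒜.erase H₀) X hcardB hhypB hnleB hX hdim hess'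
      rw [Isum_erase hH₀ X]
      have hsec : 0 ≤ (-1 : ℤ) ^ (adim X - 1) * (- Isum (X ⊓ H₀) (𝒜.erase H₀)) := by
        by_cases h1 : X ⊓ H₀ = ⊥ ∨ adim (X ⊓ H₀) = 0
        · rw [Isum_eq_zero_of_small h1]; simp
        · by_cases h2 : ∃ H ∈ 𝒜.erase H₀, X ⊓ H₀ ≤ H
          · obtain ⟨H, hh, hxh⟩ := h2
            rw [Isum_eq_zero_of_le hh hxh]; simp
          · push_neg at h1 h2
            have hX'ne : X ⊓ H₀ ≠ ⊥ := h1.1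
            obtain ⟨p, hp⟩ := nonempty_coe hX'ne
            have hp1 : p ∈ X := ((AffineSubspace.mem_inf_iff p X H₀).1 hp).1
            have hp2 : p ∈ H₀ := ((AffineSubspace.mem_inf_iff p X H₀).1 hp).2
            have hnd : ¬ X.direction ≤ H₀.direction := by
              intro hcon
              have hdireq : (X ⊓ H₀).direction = X.direction := by
                rw [AffineSubspace.direction_inf_of_mem hp1 hp2]
                exact inf_eq_left.2 hcon
              have hXX : X ⊓ H₀ = X :=
                AffineSubspace.ext_of_direction_eq hdireq ⟨p, hp, hp1⟩
              exact hnle H₀ hH₀ (by rw [← hXX]; exact inf_le_right)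
            obtain ⟨cne, cdir, cad⟩ := cut (hhyp H₀ hH₀) hX hnd
            have hdX' : 1 ≤ adim (X ⊓ H₀) := Nat.one_le_iff_ne_zero.2 h1.2
            have hEssX' : Ess (X ⊓ H₀) (𝒜.erase H₀) := by
              obtain ⟨s, hs, hbot⟩ := hess
              refine ⟨s.erase H₀, Finset.erase_subset_erase _ hs, ?_⟩
              rw [← le_bot_iff, cdir]
              have hle1 : (s.erase H₀).inf (fun K => K.direction) ⊓
                  (X.direction ⊓ H₀.direction) ≤
                  (s.inf fun K => K.direction) ⊓ X.direction := by
                refine le_inf ?_ (le_trans inf_le_right inf_le_left)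
                refine Finset.le_inf fun K hK => ?_
                by_cases hKH : K = H₀
                · subst hKH
                  exact le_trans inf_le_right inf_le_right
                · exact le_trans inf_le_left
                    (Finset.inf_le (Finset.mem_erase.2 ⟨hKH, hK⟩))
              exact le_trans hle1 hbot.le
            have hIH2 := IH (𝒜.erase H₀) (X ⊓ H₀) hcardB hhypB h2 hX'ne hdX' hEssX'
            obtain ⟨e', he'⟩ : ∃ e', adim (X ⊓ H₀) = e' + 1 ∨ adim (X ⊓ H₀) = e' := ⟨adim (X ⊓ H₀) - 1, by omega⟩
            clear he'
            obtain ⟨e, he⟩ : ∃ e, adim (X ⊓ H₀) = e := ⟨_, rfl⟩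
            have h5 : adim X - 1 = e := by omega
            rw [h5]
            rw [he] at hIH2
            have h7 : (-1 : ℤ) ^ e = -(-1 : ℤ) ^ (e - 1) := by
              have h6 : e = (e - 1) + 1 := by omega
              conv_lhs => rw [h6]
              rw [pow_succ]; ring
            rw [h7]
            have hg : -(-1 : ℤ) ^ (e - 1) * (-Isum (X ⊓ H₀) (𝒜.erase H₀)) =
                (-1 : ℤ) ^ (e - 1) * Isum (X ⊓ H₀) (𝒜.erase H₀) := by ring
            rw [hg]
            exact hIH2.le
      have expand : (-1 : ℤ) ^ (adim X - 1) *
          (Isum X (𝒜.erase H₀) - Isum (X ⊓ H₀) (𝒜.erase H₀)) =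
          (-1 : ℤ) ^ (adim X - 1) * Isum X (𝒜.erase H₀) +
          (-1 : ℤ) ^ (adim X - 1) * (- Isum (X ⊓ H₀) (𝒜.erase H₀)) := by ring
      rw [expand]
      linarith
    · -- minimal case
      push_neg at hmin
      have hK : ∀ J ⊆ 𝒜, ∀ H ∈ 𝒜, H ∉ J →
          ¬ (X.direction ⊓ J.inf (fun K => K.direction) ≤ H.direction) := by
        intro J hJ H hH hHJ hcon
        apply hmin H hH
        refine ⟨𝒜.erase H, Finset.Subset.refl _, ?_⟩
        obtain ⟨s₀, hs₀, hbot₀⟩ := hess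
        rw [← le_bot_iff]
        have hJE : J ⊆ 𝒜.erase H := fun x hx =>
          Finset.mem_erase.2 ⟨fun he => hHJ (he ▸ hx), hJ hx⟩
        have e1 : (𝒜.erase H).inf (fun K => K.direction) ≤
            J.inf (fun K => K.direction) := Finset.inf_mono hJE
        have e2 : (𝒜.erase H).inf (fun K => K.direction) ⊓ X.direction ≤ H.direction := by
          refine le_trans ?_ hcon
          rw [inf_comm]
          exact inf_le_inf_left _ e1
        have e3 : (𝒜.erase H).inf (fun K => K.direction) ⊓ X.direction ≤
            𝒜.inf (fun K => K.direction) := by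
          have h𝒜 : 𝒜.inf (fun K => K.direction) =
              H.direction ⊓ (𝒜.erase H).inf (fun K => K.direction) := by
            conv_lhs => rw [← Finset.insert_erase hH]
            rw [Finset.inf_insert]
          rw [h𝒜]
          exact le_inf e2 inf_le_left
        have e4 : (𝒜.erase H).inf (fun K => K.direction) ⊓ X.direction ≤
            (s₀.inf fun K => K.direction) ⊓ X.direction :=
          le_inf (le_trans e3 (Finset.inf_mono hs₀)) inf_le_right
        exact le_trans e4 hbot₀.le
      -- dimension bookkeeping along all subsets
      have hT : ∀ J : Finset (AffineSubspace ℂ (Vsp ℓ)), J ⊆ 𝒜 →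
          (X ⊓ J.inf id ≠ ⊥) ∧
          ((X ⊓ J.inf id).direction = X.direction ⊓ J.inf (fun K => K.direction)) ∧
          (adim (X ⊓ J.inf id) + J.card = adim X) := by
        intro J
        induction J using Finset.induction_on with
        | empty =>
          intro _
          refine ⟨by rwa [Finset.inf_empty, inf_top_eq], ?_, ?_⟩
          · rw [Finset.inf_empty, inf_top_eq, Finset.inf_empty, inf_top_eq]
          · rw [Finset.inf_empty, inf_top_eq, Finset.card_empty]
            omega
        | @insert H J' hnotin IH' =>
          intro hsub
          have hJ'sub : J' ⊆ 𝒜 := fun x hx => hsub (Finset.mem_insert_of_mem hx)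
          have hH𝒜 : H ∈ 𝒜 := hsub (Finset.mem_insert_self _ _)
          obtain ⟨hne, hdir, hadim⟩ := IH' hJ'sub
          have hnd : ¬ (X ⊓ J'.inf id).direction ≤ H.direction := by
            rw [hdir]; exact hK J' hJ'sub H hH𝒜 hnotin
          obtain ⟨cne, cdirₓ, cad⟩ := cut (hhyp H hH𝒜) hne hnd
          have heq : X ⊓ (insert H J').inf id = (X ⊓ J'.inf id) ⊓ H := by
            rw [Finset.inf_insert]
            show X ⊓ (H ⊓ J'.inf id) = X ⊓ J'.inf id ⊓ H
            rw [inf_comm H (J'.inf id), ← inf_assoc]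
          refine ⟨by rwa [heq], ?_, ?_⟩
          · rw [heq, cdirₓ, hdir, Finset.inf_insert]
            show X.direction ⊓ J'.inf (fun K => K.direction) ⊓ H.direction =
              X.direction ⊓ (H.direction ⊓ J'.inf fun K => K.direction)
            rw [inf_comm H.direction, ← inf_assoc]
          · rw [heq, Finset.card_insert_of_notMem hnotin]
            omega
      have hAcard : 𝒜.card = adim X := by
        obtain ⟨hne, hdir, hadim⟩ := hT 𝒜 (Finset.Subset.refl _)
        obtain ⟨s₀, hs₀, hbot₀⟩ := hess
        have hbotdir : (X ⊓ 𝒜.inf id).direction = ⊥ := by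
          rw [← le_bot_iff, hdir]
          refine le_trans ?_ hbot₀.le
          exact le_inf (le_trans inf_le_right (Finset.inf_mono hs₀)) inf_le_left
        have h0 : adim (X ⊓ 𝒜.inf id) = 0 := by
          rw [adim, hbotdir, finrank_bot]
        omega
      -- evaluate the sum
      have heval : ∀ J ∈ 𝒜.powerset,
          (if adm X J then (-1 : ℤ) ^ J.card else 0) =
          (-1 : ℤ) ^ J.card - (if J = 𝒜 then (-1 : ℤ) ^ J.card else 0) := by
        intro J hJp
        have hJ := Finset.mem_powerset.1 hJp
        obtain ⟨hne, hdir, hadim⟩ := hT J hJ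
        by_cases hJA : J = 𝒜
        · subst hJA
          rw [if_neg, if_pos rfl, sub_self]
          rintro ⟨-, hd⟩
          omega
        · rw [if_pos, if_neg hJA, sub_zero]
          refine ⟨hne, ?_⟩
          have hlt : J.card < 𝒜.card :=
            Finset.card_lt_card (Finset.ssubset_iff_subset_ne.2 ⟨hJ, hJA⟩)
          omega
      have hIsum : Isum X 𝒜 = -(-1 : ℤ) ^ (adim X) := by
        rw [Isum, Finset.sum_congr rfl heval, Finset.sum_sub_distrib]
        rw [Finset.sum_ite_eq' 𝒜.powerset 𝒜 (fun J => (-1 : ℤ) ^ J.card)]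
        rw [if_pos (Finset.mem_powerset_self 𝒜)]
        have hnonempty : 𝒜.Nonempty := by
          rw [← Finset.card_pos]; omega
        rw [Finset.sum_powerset_neg_one_pow_card_of_nonempty hnonempty, hAcard]
        ring
      obtain ⟨d', hd'⟩ : ∃ d', adim X = d' + 1 := ⟨adim X - 1, by omega⟩
      rw [hIsum, hd']
      simp only [Nat.add_sub_cancel]
      have hg : (-1 : ℤ) ^ d' * -(-1 : ℤ) ^ (d' + 1) = (-1 : ℤ) ^ d' * (-1 : ℤ) ^ d' := by
        rw [pow_succ]; ring
      rw [hg, ← pow_add, Even.neg_one_pow ⟨d', by ring⟩]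
      norm_num

end EulerAux
namespace EulerAux
open Arrangement Finset

variable {ℓ : ℕ}

/-- Whitney-style subset sum attached to a poset element. -/
def nu (W : AffineSubspace ℂ (Vsp ℓ)) (ℬ : Finset (AffineSubspace ℂ (Vsp ℓ)))
    (X : AffineSubspace ℂ (Vsp ℓ)) : ℤ :=
  ∑ I ∈ ℬ.powerset.filter (fun I => W ⊓ I.inf id = X), (-1 : ℤ) ^ I.card

lemma mem_interPoset_iff {W X : AffineSubspace ℂ (Vsp ℓ)}
    {ℬ : Finset (AffineSubspace ℂ (Vsp ℓ))} :
    X ∈ interPoset W ℬ ↔ (∃ I ⊆ ℬ, W ⊓ I.inf id = X) ∧ X ≠ ⊥ := by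
  simp only [interPoset, Finset.mem_filter, Finset.mem_image, Finset.mem_powerset]

lemma nu_self {W : AffineSubspace ℂ (Vsp ℓ)} {ℬ : Finset (AffineSubspace ℂ (Vsp ℓ))}
    (hnle : ∀ H ∈ ℬ, ¬ W ≤ H) : nu W ℬ W = 1 := by
  rw [nu]
  have hfil : ℬ.powerset.filter (fun I => W ⊓ I.inf id = W) = {∅} := by
    ext I
    simp only [Finset.mem_filter, Finset.mem_powerset, Finset.mem_singleton]
    constructor
    · rintro ⟨hsub, heq⟩
      by_contra hne
      obtain ⟨H, hH⟩ := Finset.nonempty_iff_ne_empty.2 hne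
      have hWle : W ≤ H := le_trans (inf_eq_left.1 heq) (Finset.inf_le hH)
      exact hnle H (hsub hH) hWle
    · rintro rfl
      exact ⟨Finset.empty_subset _, by rw [Finset.inf_empty, inf_top_eq]⟩
  rw [hfil, Finset.sum_singleton]
  norm_num

lemma sum_nu_zero {W X : AffineSubspace ℂ (Vsp ℓ)} {ℬ : Finset (AffineSubspace ℂ (Vsp ℓ))}
    (hX : X ∈ interPoset W ℬ) (hXW : X ≠ W) :
    ∑ Y ∈ (interPoset W ℬ).filter (fun Y => X ≤ Y), nu W ℬ Y = 0 := by
  obtain ⟨⟨I₀, hI₀sub, hI₀eq⟩, hXbot⟩ := mem_interPoset_iff.1 hX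
  have hXleW : X ≤ W := by rw [← hI₀eq]; exact inf_le_left
  have hmaps : ∀ I ∈ ℬ.powerset.filter (fun I => X ≤ W ⊓ I.inf id),
      W ⊓ I.inf id ∈ (interPoset W ℬ).filter (fun Y => X ≤ Y) := by
    intro I hI
    obtain ⟨hsub, hle⟩ := Finset.mem_filter.1 hI
    refine Finset.mem_filter.2 ⟨mem_interPoset_iff.2
      ⟨⟨I, Finset.mem_powerset.1 hsub, rfl⟩, ?_⟩, hle⟩
    intro hbot
    rw [hbot] at hle
    exact hXbot (le_bot_iff.1 hle)
  have hfib := Finset.sum_fiberwise_of_maps_to hmaps (fun I => (-1 : ℤ) ^ I.card)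
  have hinner : ∀ Y ∈ (interPoset W ℬ).filter (fun Y => X ≤ Y),
      (∑ I ∈ (ℬ.powerset.filter (fun I => X ≤ W ⊓ I.inf id)).filter
        (fun I => W ⊓ I.inf id = Y), (-1 : ℤ) ^ I.card) = nu W ℬ Y := by
    intro Y hY
    have hXY : X ≤ Y := (Finset.mem_filter.1 hY).2
    rw [nu]
    congr 1
    ext I
    simp only [Finset.mem_filter, Finset.mem_powerset]
    constructor
    · rintro ⟨⟨h1, -⟩, h3⟩; exact ⟨h1, h3⟩
    · rintro ⟨h1, h2⟩; exact ⟨⟨h1, h2 ▸ hXY⟩, h2⟩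
  rw [← Finset.sum_congr rfl hinner, hfib]
  -- the remaining sum is over the powerset of a nonempty finset
  have hset : ℬ.powerset.filter (fun I => X ≤ W ⊓ I.inf id) =
      (ℬ.filter (fun H => X ≤ H)).powerset := by
    ext I
    simp only [Finset.mem_filter, Finset.mem_powerset]
    constructor
    · rintro ⟨h1, h2⟩
      intro H hH
      exact Finset.mem_filter.2 ⟨h1 hH,
        le_trans h2 (le_trans inf_le_right (Finset.inf_le hH))⟩
    · intro h
      refine ⟨fun H hH => (Finset.mem_filter.1 (h hH)).1,
        le_inf hXleW (Finset.le_inf fun H hH => (Finset.mem_filter.1 (h hH)).2)⟩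
  rw [hset]
  refine Finset.sum_powerset_neg_one_pow_card_of_nonempty ?_
  have hI₀ne : I₀.Nonempty := by
    rw [Finset.nonempty_iff_ne_empty]
    rintro rfl
    rw [Finset.inf_empty, inf_top_eq] at hI₀eq
    exact hXW hI₀eq.symm
  obtain ⟨H, hH⟩ := hI₀ne
  exact ⟨H, Finset.mem_filter.2 ⟨hI₀sub hH,
    by rw [← hI₀eq]; exact le_trans inf_le_right (Finset.inf_le hH)⟩⟩

lemma munu {W : AffineSubspace ℂ (Vsp ℓ)} {ℬ : Finset (AffineSubspace ℂ (Vsp ℓ))}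
    (hnle : ∀ H ∈ ℬ, ¬ W ≤ H) :
    ∀ n, ∀ X ∈ interPoset W ℬ, adim W ≤ n + adim X →
      mobiusFuel W ℬ (n + 1) X = nu W ℬ X := by
  intro n
  induction n with
  | zero =>
    intro X hX had
    obtain ⟨⟨I₀, hI₀sub, hI₀eq⟩, hXbot⟩ := mem_interPoset_iff.1 hX
    have hXleW : X ≤ W := by rw [← hI₀eq]; exact inf_le_left
    have hXW : X = W := eq_of_le_of_adim_le hXleW (by omega) hXbot
    subst hXW
    rw [show mobiusFuel X ℬ (0 + 1) X = 1 from by simp [mobiusFuel], nu_self hnle]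
  | succ n IHn =>
    intro X hX had
    by_cases hXW : X = W
    · subst hXW
      rw [show mobiusFuel X ℬ (n + 1 + 1) X = 1 from by simp [mobiusFuel], nu_self hnle]
    · obtain ⟨⟨I₀, hI₀sub, hI₀eq⟩, hXbot⟩ := mem_interPoset_iff.1 hX
      have hstep : mobiusFuel W ℬ (n + 1 + 1) X =
          - ∑ Y ∈ (interPoset W ℬ).filter (fun Y => X < Y), mobiusFuel W ℬ (n + 1) Y := by
        simp [mobiusFuel, hXW]
      rw [hstep]
      have hcongr : ∀ Y ∈ (interPoset W ℬ).filter (fun Y => X < Y),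
          mobiusFuel W ℬ (n + 1) Y = nu W ℬ Y := by
        intro Y hY
        obtain ⟨hYP, hlt⟩ := Finset.mem_filter.1 hY
        have hd : adim X < adim Y := adim_lt_of_lt hlt hXbot
        exact IHn Y hYP (by omega)
      rw [Finset.sum_congr rfl hcongr]
      have hzero := sum_nu_zero hX hXW
      have hsplit : (interPoset W ℬ).filter (fun Y => X ≤ Y) =
          insert X ((interPoset W ℬ).filter (fun Y => X < Y)) := by
        ext Y
        simp only [Finset.mem_insert, Finset.mem_filter]
        constructor
        · rintro ⟨hYP, hle⟩
          rcases hle.lt_or_eq with h | h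
          · exact Or.inr ⟨hYP, h⟩
          · exact Or.inl h.symm
        · rintro (rfl | ⟨hYP, hlt⟩)
          · exact ⟨hX, le_refl _⟩
          · exact ⟨hYP, hlt.le⟩
      rw [hsplit, Finset.sum_insert (by
        simp only [Finset.mem_filter]
        rintro ⟨-, hc⟩
        exact lt_irrefl X hc)] at hzero
      linarith

end EulerAux
namespace EulerAux
open Arrangement Finset

variable {ℓ : ℕ} {U : AffineSubspace ℂ (Vsp ℓ)} {𝒜 : Finset (AffineSubspace ℂ (Vsp ℓ))}

lemma adim_U (hU : GenericTo U 𝒜) : adim U + 1 = ℓ ∧ U ≠ ⊥ :=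
  ⟨by have := hU.1.2.2; rwa [adim_top] at this, hU.1.2.1⟩

lemma mem_top_interPoset {J : Finset (AffineSubspace ℂ (Vsp ℓ))} (hJ : J ⊆ 𝒜)
    (hne : J.inf id ≠ ⊥) : J.inf id ∈ interPoset ⊤ 𝒜 :=
  mem_interPoset_iff.2 ⟨⟨J, hJ, top_inf_eq _⟩, hne⟩

lemma not_inf_le_U (hU : GenericTo U 𝒜) {J : Finset (AffineSubspace ℂ (Vsp ℓ))}
    (hJ : J ⊆ 𝒜) (hne : J.inf id ≠ ⊥) : ¬ J.inf id ≤ U :=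
  (hU.2 _ (mem_top_interPoset hJ hne)).1

lemma generic_dim (hU : GenericTo U 𝒜) {J : Finset (AffineSubspace ℂ (Vsp ℓ))}
    (hJ : J ⊆ 𝒜) (hne : J.inf id ≠ ⊥) (hd : 1 ≤ adim (J.inf id)) :
    U ⊓ J.inf id ≠ ⊥ ∧ adim (U ⊓ J.inf id) + 1 = adim (J.inf id) := by
  have h := (hU.2 _ (mem_top_interPoset hJ hne)).2 hd
  exact ⟨by rw [inf_comm]; exact h.1, by rw [inf_comm]; exact h.2⟩

lemma singleton_inf {H : AffineSubspace ℂ (Vsp ℓ)} : ({H} : Finset _).inf id = H :=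
  Finset.inf_singleton

lemma not_H_le_U (hU : GenericTo U 𝒜) (hhyp : ∀ H ∈ 𝒜, IsHyperplaneIn ⊤ H)
    {H : AffineSubspace ℂ (Vsp ℓ)} (hH : H ∈ 𝒜) : ¬ H ≤ U := by
  have := not_inf_le_U hU (show ({H} : Finset _) ⊆ 𝒜 by simp [hH])
    (by rw [singleton_inf]; exact (hhyp H hH).2.1)
  rwa [singleton_inf] at this

lemma not_U_le_H (hU : GenericTo U 𝒜) (hhyp : ∀ H ∈ 𝒜, IsHyperplaneIn ⊤ H)
    {H : AffineSubspace ℂ (Vsp ℓ)} (hH : H ∈ 𝒜) : ¬ U ≤ H := by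
  intro h
  have h1 : adim H + 1 = ℓ := by
    have := (hhyp H hH).2.2; rwa [adim_top] at this
  have h2 : adim U + 1 = ℓ := (adim_U hU).1
  have hUH : U = H := eq_of_le_of_adim_le h (by omega) (adim_U hU).2
  exact not_H_le_U hU hhyp hH (le_of_eq hUH.symm)

lemma adim_pos_of_central (hU : GenericTo U 𝒜) {J : Finset (AffineSubspace ℂ (Vsp ℓ))}
    (hJ : J ⊆ 𝒜) (hne : J.inf id ≠ ⊥) (hcen : U ⊓ J.inf id ≠ ⊥) :
    1 ≤ adim (J.inf id) := by
  by_contra h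
  push_neg at h
  have heq : U ⊓ J.inf id = J.inf id :=
    eq_of_le_of_adim_le inf_le_right (by omega) hcen
  exact not_inf_le_U hU hJ hne (by rw [← heq]; exact inf_le_left)

lemma adim_H_pos (hU : GenericTo U 𝒜) (hhyp : ∀ H ∈ 𝒜, IsHyperplaneIn ⊤ H)
    {H : AffineSubspace ℂ (Vsp ℓ)} (hH : H ∈ 𝒜) (hne : H ⊓ U ≠ ⊥) : 1 ≤ adim H := by
  by_contra h0
  push_neg at h0
  have heq : H ⊓ U = H := eq_of_le_of_adim_le inf_le_left (by omega) hne
  exact not_H_le_U hU hhyp hH (by rw [← heq]; exact inf_le_right)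

lemma trace_inj (hU : GenericTo U 𝒜) (hhyp : ∀ H ∈ 𝒜, IsHyperplaneIn ⊤ H)
    {H H' : AffineSubspace ℂ (Vsp ℓ)} (hH : H ∈ 𝒜) (hH' : H' ∈ 𝒜)
    (hne : H ⊓ U ≠ ⊥) (heq : H ⊓ U = H' ⊓ U) : H = H' := by
  by_contra hcon
  have hhne : H ≠ ⊥ := (hhyp H hH).2.1
  have hh'ne : H' ≠ ⊥ := (hhyp H' hH').2.1
  have hdH : adim H + 1 = ℓ := by have := (hhyp H hH).2.2; rwa [adim_top] at this
  have hdH' : adim H' + 1 = ℓ := by have := (hhyp H' hH').2.2; rwa [adim_top] at this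
  obtain ⟨z, hz⟩ := nonempty_coe hne
  have hzH : z ∈ H := ((AffineSubspace.mem_inf_iff z H U).1 hz).1
  have hz' : z ∈ H' ⊓ U := heq ▸ hz
  have hzH' : z ∈ H' := ((AffineSubspace.mem_inf_iff z H' U).1 hz').1
  have hdd : ¬ H.direction ≤ H'.direction := by
    intro hdir
    have hdeq : H.direction = H'.direction := by
      refine Submodule.eq_of_le_of_finrank_le hdir ?_
      show adim H' ≤ adim H
      omega
    exact hcon (AffineSubspace.ext_of_direction_eq hdeq ⟨z, hzH, hzH'⟩)
  have hisH' : IsHyp H' := ⟨hh'ne, hdH'⟩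
  obtain ⟨cne, cdir, cad⟩ := cut hisH' hhne hdd
  have hH1 : 1 ≤ adim H := adim_H_pos hU hhyp hH hne
  have hgen := generic_dim hU (show ({H} : Finset _) ⊆ 𝒜 by simp [hH])
    (by rw [singleton_inf]; exact hhne) (by rw [singleton_inf]; exact hH1)
  rw [singleton_inf] at hgen
  rw [inf_comm U H] at hgen
  -- hgen.2 : adim (H ⊓ U) + 1 = adim H ; cad : adim (H ⊓ H') + 1 = adim H
  have hZle : H ⊓ U ≤ H ⊓ H' := le_inf inf_le_left (by rw [heq]; exact inf_le_left)
  have hZeq : H ⊓ U = H ⊓ H' := by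
    refine eq_of_le_of_adim_le hZle ?_ hne
    have := hgen.2
    omega
  have hpair : ({H, H'} : Finset (AffineSubspace ℂ (Vsp ℓ))).inf id = H ⊓ H' := by
    rw [Finset.inf_insert, Finset.inf_singleton]
    rfl
  have hpairsub : ({H, H'} : Finset (AffineSubspace ℂ (Vsp ℓ))) ⊆ 𝒜 := by
    intro K hK
    rcases Finset.mem_insert.1 hK with rfl | hK
    · exact hH
    · rw [Finset.mem_singleton.1 hK]; exact hH'
  exact not_inf_le_U hU hpairsub (by rw [hpair]; exact cne)
    (by rw [hpair, ← hZeq]; exact inf_le_right)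

lemma inf_image_trace (U : AffineSubspace ℂ (Vsp ℓ)) :
    ∀ J : Finset (AffineSubspace ℂ (Vsp ℓ)),
      U ⊓ (J.image (fun H => H ⊓ U)).inf id = U ⊓ J.inf id := by
  intro J
  induction J using Finset.induction_on with
  | empty => simp
  | @insert H J' hni IH =>
    rw [Finset.image_insert, Finset.inf_insert, Finset.inf_insert]
    show U ⊓ (H ⊓ U ⊓ (J'.image (fun H => H ⊓ U)).inf id) = U ⊓ (H ⊓ J'.inf id)
    calc U ⊓ (H ⊓ U ⊓ (J'.image (fun H => H ⊓ U)).inf id)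
        = H ⊓ U ⊓ (U ⊓ (J'.image (fun H => H ⊓ U)).inf id) := by rw [inf_left_comm]
      _ = H ⊓ (U ⊓ (U ⊓ (J'.image (fun H => H ⊓ U)).inf id)) := by rw [inf_assoc]
      _ = H ⊓ (U ⊓ U ⊓ (J'.image (fun H => H ⊓ U)).inf id) := by rw [← inf_assoc U U]
      _ = H ⊓ (U ⊓ (J'.image (fun H => H ⊓ U)).inf id) := by rw [inf_idem]
      _ = H ⊓ (U ⊓ J'.inf id) := by rw [IH]
      _ = U ⊓ (H ⊓ J'.inf id) := by rw [inf_left_comm]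

lemma mem_restrictTo_iff {H : AffineSubspace ℂ (Vsp ℓ)} :
    H ∈ restrictTo U 𝒜 ↔ (∃ H₀ ∈ 𝒜, H₀ ⊓ U = H) ∧ H ≠ ⊥ := by
  simp only [restrictTo, Finset.mem_filter, Finset.mem_image]

lemma not_U_le_trace (hU : GenericTo U 𝒜) (hhyp : ∀ H ∈ 𝒜, IsHyperplaneIn ⊤ H) :
    ∀ H ∈ restrictTo U 𝒜, ¬ U ≤ H := by
  intro H hH hle
  obtain ⟨⟨H₀, hH₀, rfl⟩, hne⟩ := mem_restrictTo_iff.1 hH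
  exact not_U_le_H hU hhyp hH₀ (le_trans hle inf_le_left)

end EulerAux

open EulerAux Finset

open Arrangement in
/-- For an essential arrangement `𝒜` in `ℂ^ℓ` and a generic
hyperplane `U`, the Euler characteristic of the generic section satisfies
`(-1)^{ℓ-1} χ(𝒜 ∩ U, 1) > 0` (by Orlik–Solomon, `χ(𝒜 ∩ U, 1)` is the topological
Euler characteristic of `M(𝒜) ∩ U`). -/
theorem euler_char_generic_section (ℓ : ℕ) (hℓ : 1 ≤ ℓ)
    (𝒜 : Finset (AffineSubspace ℂ (Vsp ℓ)))
    (hhyp : ∀ H ∈ 𝒜, IsHyperplaneIn ⊤ H) (hess : EssentialIn ⊤ 𝒜)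
    (U : AffineSubspace ℂ (Vsp ℓ)) (hU : GenericTo U 𝒜) :
    0 < (-1 : ℤ) ^ (ℓ - 1) * (charPoly U (restrictTo U 𝒜)).eval 1 := by
  set 𝒜' := restrictTo U 𝒜 with h𝒜'
  -- Step A: evaluation of the characteristic polynomial at 1
  have stepA : (charPoly U 𝒜').eval 1 = ∑ X ∈ interPoset U 𝒜', mobius U 𝒜' X := by
    rw [charPoly, Polynomial.eval_finset_sum]
    refine Finset.sum_congr rfl fun X hX => ?_
    simp
  -- Step B: Möbius = Whitney sums
  have stepB : ∀ X ∈ interPoset U 𝒜', mobius U 𝒜' X = nu U 𝒜' X := by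
    intro X hX
    obtain ⟨m, hm⟩ : ∃ m, ℓ = m + 1 := ⟨ℓ - 1, by omega⟩
    rw [mobius]
    calc mobiusFuel U 𝒜' ℓ X = mobiusFuel U 𝒜' (m + 1) X :=
          congrArg (fun k => mobiusFuel U 𝒜' k X) hm
      _ = nu U 𝒜' X := by
          refine munu (not_U_le_trace hU hhyp) m X hX ?_
          have h1 : adim U + 1 = ℓ := (adim_U hU).1
          omega
  -- Step C: regroup the Whitney sums over all central subsets of 𝒜'
  have stepC : ∑ X ∈ interPoset U 𝒜', nu U 𝒜' X =
      ∑ I ∈ 𝒜'.powerset.filter (fun I => U ⊓ I.inf id ≠ ⊥), (-1 : ℤ) ^ I.card := by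
    have hmaps : ∀ I ∈ 𝒜'.powerset.filter (fun I => U ⊓ I.inf id ≠ ⊥),
        U ⊓ I.inf id ∈ interPoset U 𝒜' := by
      intro I hI
      obtain ⟨h1, h2⟩ := Finset.mem_filter.1 hI
      exact mem_interPoset_iff.2 ⟨⟨I, Finset.mem_powerset.1 h1, rfl⟩, h2⟩
    have hfib := Finset.sum_fiberwise_of_maps_to hmaps (fun I => (-1 : ℤ) ^ I.card)
    rw [← hfib]
    refine Finset.sum_congr rfl fun X hX => ?_
    rw [nu]
    have hXbot : X ≠ ⊥ := (mem_interPoset_iff.1 hX).2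
    congr 1
    ext I
    constructor
    · intro hmem
      obtain ⟨hpow, heqX⟩ := Finset.mem_filter.1 hmem
      refine Finset.mem_filter.2 ⟨Finset.mem_filter.2 ⟨hpow, ?_⟩, heqX⟩
      rw [heqX]; exact hXbot
    · intro hmem
      obtain ⟨hs, heqX⟩ := Finset.mem_filter.1 hmem
      obtain ⟨hpow, -⟩ := Finset.mem_filter.1 hs
      exact Finset.mem_filter.2 ⟨hpow, heqX⟩
  -- Step D: bijection between central subsets of 𝒜' and admissible subsets of 𝒜
  have stepD : ∑ I ∈ 𝒜'.powerset.filter (fun I => U ⊓ I.inf id ≠ ⊥), (-1 : ℤ) ^ I.card =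
      ∑ J ∈ 𝒜.powerset.filter (fun J => J.inf id ≠ ⊥ ∧ 1 ≤ adim (J.inf id)),
        (-1 : ℤ) ^ J.card := by
    refine Finset.sum_bij' (fun I _ => 𝒜.filter (fun H => H ⊓ U ≠ ⊥ ∧ H ⊓ U ∈ I))
      (fun J _ => J.image (fun H => H ⊓ U)) ?_ ?_ ?_ ?_ ?_
    · -- inverse map lands in admissible subsets of 𝒜
      intro I hI
      obtain ⟨hIsub', hIcen⟩ := Finset.mem_filter.1 hI
      have hIsub := Finset.mem_powerset.1 hIsub'
      set K := 𝒜.filter (fun H => H ⊓ U ≠ ⊥ ∧ H ⊓ U ∈ I) with hK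
      have k1 : K.image (fun H => H ⊓ U) = I := by
        ext V
        simp only [Finset.mem_image, hK, Finset.mem_filter]
        constructor
        · rintro ⟨H, ⟨-, -, hmem⟩, rfl⟩; exact hmem
        · intro hV
          obtain ⟨⟨H₀, hH₀, rfl⟩, hVne⟩ := mem_restrictTo_iff.1 (hIsub hV)
          exact ⟨H₀, ⟨hH₀, hVne, hV⟩, rfl⟩
      have k2 : U ⊓ K.inf id = U ⊓ I.inf id := by
        rw [← k1, inf_image_trace]
      have hKne : K.inf id ≠ ⊥ := by
        intro hc
        rw [hc] at k2
        rw [inf_bot_eq] at k2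
        exact hIcen k2.symm
      refine Finset.mem_filter.2 ⟨Finset.mem_powerset.2 (Finset.filter_subset _ _),
        hKne, ?_⟩
      exact adim_pos_of_central hU (Finset.filter_subset _ _) hKne (by rw [k2]; exact hIcen)
    · -- forward map lands in central subsets of 𝒜'
      intro J hJ
      obtain ⟨hJsub', hJne, hJd⟩ := Finset.mem_filter.1 hJ
      have hJsub := Finset.mem_powerset.1 hJsub'
      have hcen : U ⊓ J.inf id ≠ ⊥ := (generic_dim hU hJsub hJne hJd).1
      have f1 : ∀ H ∈ J, H ⊓ U ≠ ⊥ := by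
        intro H hH hc
        apply hcen
        rw [← le_bot_iff, ← hc]
        exact le_inf (le_trans inf_le_right (Finset.inf_le hH)) inf_le_left
      refine Finset.mem_filter.2 ⟨Finset.mem_powerset.2 ?_, ?_⟩
      · intro V hV
        obtain ⟨H, hH, rfl⟩ := Finset.mem_image.1 hV
        exact mem_restrictTo_iff.2 ⟨⟨H, hJsub hH, rfl⟩, f1 H hH⟩
      · rw [inf_image_trace]
        exact hcen
    · -- left inverse
      intro I hI
      obtain ⟨hIsub', hIcen⟩ := Finset.mem_filter.1 hI
      have hIsub := Finset.mem_powerset.1 hIsub'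
      ext V
      simp only [Finset.mem_image, Finset.mem_filter]
      constructor
      · rintro ⟨H, ⟨-, -, hmem⟩, rfl⟩; exact hmem
      · intro hV
        obtain ⟨⟨H₀, hH₀, rfl⟩, hVne⟩ := mem_restrictTo_iff.1 (hIsub hV)
        exact ⟨H₀, ⟨hH₀, hVne, hV⟩, rfl⟩
    · -- right inverse
      intro J hJ
      obtain ⟨hJsub', hJne, hJd⟩ := Finset.mem_filter.1 hJ
      have hJsub := Finset.mem_powerset.1 hJsub'
      have hcen : U ⊓ J.inf id ≠ ⊥ := (generic_dim hU hJsub hJne hJd).1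
      have f1 : ∀ H ∈ J, H ⊓ U ≠ ⊥ := by
        intro H hH hc
        apply hcen
        rw [← le_bot_iff, ← hc]
        exact le_inf (le_trans inf_le_right (Finset.inf_le hH)) inf_le_left
      ext H
      simp only [Finset.mem_filter, Finset.mem_image]
      constructor
      · rintro ⟨hH𝒜, -, H', hH', heq⟩
        rw [trace_inj hU hhyp hH𝒜 (hJsub hH') (by rw [← heq]; exact f1 H' hH') heq.symm]
        exact hH'
      · intro hH
        exact ⟨hJsub hH, f1 H hH, H, hH, rfl⟩
    · -- values agree
      intro I hI
      obtain ⟨hIsub', hIcen⟩ := Finset.mem_filter.1 hI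
      have hIsub := Finset.mem_powerset.1 hIsub'
      have k1 : (𝒜.filter (fun H => H ⊓ U ≠ ⊥ ∧ H ⊓ U ∈ I)).image (fun H => H ⊓ U) = I := by
        ext V
        simp only [Finset.mem_image, Finset.mem_filter]
        constructor
        · rintro ⟨H, ⟨-, -, hmem⟩, rfl⟩; exact hmem
        · intro hV
          obtain ⟨⟨H₀, hH₀, rfl⟩, hVne⟩ := mem_restrictTo_iff.1 (hIsub hV)
          exact ⟨H₀, ⟨hH₀, hVne, hV⟩, rfl⟩
      have hinj : Set.InjOn (fun H => H ⊓ U)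
          (𝒜.filter (fun H => H ⊓ U ≠ ⊥ ∧ H ⊓ U ∈ I) : Finset _) := by
        intro H hH H' hH' heq
        obtain ⟨hH𝒜, hHne, -⟩ := Finset.mem_filter.1 hH
        obtain ⟨hH'𝒜, -, -⟩ := Finset.mem_filter.1 hH'
        exact trace_inj hU hhyp hH𝒜 hH'𝒜 hHne heq
      have hcard : (𝒜.filter (fun H => H ⊓ U ≠ ⊥ ∧ H ⊓ U ∈ I)).card = I.card := by
        conv_rhs => rw [← k1]
        exact (Finset.card_image_of_injOn hinj).symm
      show (-1 : ℤ) ^ I.card =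
        (-1 : ℤ) ^ (𝒜.filter (fun H => H ⊓ U ≠ ⊥ ∧ H ⊓ U ∈ I)).card
      rw [hcard]
  -- Step E: identify with Isum ⊤ 𝒜
  have stepE : ∑ J ∈ 𝒜.powerset.filter (fun J => J.inf id ≠ ⊥ ∧ 1 ≤ adim (J.inf id)),
      (-1 : ℤ) ^ J.card = Isum ⊤ 𝒜 := by
    rw [Isum, Finset.sum_filter]
    refine Finset.sum_congr rfl fun J hJ => ?_
    simp only [adm, top_inf_eq]
  -- Step F: the main positivity theorem
  have hEss : Ess (⊤ : AffineSubspace ℂ (Vsp ℓ)) 𝒜 := by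
    obtain ⟨s, hs, -, hbot⟩ := hess
    exact ⟨s, hs, hbot⟩
  have hhyp' : ∀ H ∈ 𝒜, IsHyp H := by
    intro H hH
    refine ⟨(hhyp H hH).2.1, ?_⟩
    have := (hhyp H hH).2.2; rwa [adim_top] at this
  have hnle : ∀ H ∈ 𝒜, ¬ (⊤ : AffineSubspace ℂ (Vsp ℓ)) ≤ H := by
    intro H hH hle
    have h1 : adim H + 1 = ℓ := (hhyp' H hH).2
    have heq : (⊤ : AffineSubspace ℂ (Vsp ℓ)) = H := le_antisymm hle le_top
    rw [← heq, adim_top] at h1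
    omega
  have hmp := main_pos 𝒜.card 𝒜 ⊤ le_rfl hhyp' hnle top_ne_bot'
    (by rw [adim_top]; exact hℓ) hEss
  rw [adim_top] at hmp
  rw [stepA, Finset.sum_congr rfl stepB, stepC, stepD, stepE]
  exact hmp
end
end
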